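/- arXiv:1808.00458 — 2 statements merged into one kernel-verified Lean document; each statement's English description precedes it below -/
import Mathlib

section
/- In the triangular mesh for N modes, for every MZI at position (n, ℓ), the number of reachable inputs |I_{nℓ}| plus the number of reachable outputs |O_{nℓ}| plus n equals 2N + 1; equivalently the sensitivity index satisfies N − n = |I_{nℓ}| + |O_{nℓ}| − N − 1. -/
/-- A mesh is a set of MZI nodes `(n, ℓ)`: the node couples waveguides `n` and
`n+1` in vertical layer `ℓ`. -/
abbrev Mesh := Set (ℕ × ℕ)

/-- One layer of propagation: light on waveguide `a` before layer `j` can reach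
waveguide `b` after layer `j` iff it stays put or passes through an MZI of
layer `j` coupling the two waveguides. -/
def stepRel (S : Mesh) (j a b : ℕ) : Prop :=
  a = b ∨ ∃ p, (p, j) ∈ S ∧ (a = p ∨ a = p + 1) ∧ (b = p ∨ b = p + 1)

/-- Light entering at input port `m` can reach the MZI at `(n, ℓ)`. -/
def reachesNode (S : Mesh) (n ℓ m : ℕ) : Prop :=
  ∃ w : ℕ → ℕ, w 0 = m ∧ (∀ j, j + 1 < ℓ → stepRel S (j + 1) (w j) (w (j + 1))) ∧
    (w (ℓ - 1) = n ∨ w (ℓ - 1) = n + 1)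

/-- Light exiting the MZI at `(n, ℓ)` can reach output port `q` of a mesh with
`L` vertical layers. -/
def nodeReaches (S : Mesh) (L n ℓ q : ℕ) : Prop :=
  ∃ w : ℕ → ℕ, (w ℓ = n ∨ w ℓ = n + 1) ∧
    (∀ j, ℓ < j → j ≤ L → stepRel S j (w (j - 1)) (w j)) ∧ w L = q

/-- The set of reachable input ports `I_{nℓ}` (waveguides are numbered `1..N`). -/
def reachableInputs (S : Mesh) (N n ℓ : ℕ) : Set ℕ :=
  {m | 1 ≤ m ∧ m ≤ N ∧ reachesNode S n ℓ m}

/-- The set of reachable output ports `O_{nℓ}` of a mesh with `L` layers. -/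
def reachableOutputs (S : Mesh) (N L n ℓ : ℕ) : Set ℕ :=
  {q | 1 ≤ q ∧ q ≤ N ∧ nodeReaches S L n ℓ q}

/-- The Reck triangular mesh on `N` waveguides, with `2N - 3` vertical layers:
an MZI sits at `(n, ℓ)` iff `1 ≤ n ≤ N - 1`, `N - n ≤ ℓ ≤ N - 2 + n`, and
`n + ℓ ≡ N (mod 2)`. -/
def triangularMesh (N : ℕ) : Mesh :=
  {p | 1 ≤ p.1 ∧ p.1 ≤ N - 1 ∧ N - p.1 ≤ p.2 ∧ p.2 ≤ N - 2 + p.1 ∧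
    (p.1 + p.2) % 2 = N % 2}

/-!
Light entering at port `m` can rise by at most one waveguide per layer, and only above the
anti-diagonal `p + j = N` where the triangle's MZIs start, so it reaches `(n, ℓ)` only if
`n + N ≤ 2m + ℓ`; conversely a staircase path realises every such `m`. Hence
`|I_{nℓ}| = (N - n + ℓ)/2 + 1`. The triangle is symmetric under reversing its layers
`j ↦ 2N - 2 - j`, and reversing a path turns outputs of `(n, ℓ)` into inputs of
`(n, 2N - 2 - ℓ)`, so `|O_{nℓ}| = (3N - n - ℓ)/2` and the two counts add up to `2N + 1 - n`.
-/

theorem mem_triangularMesh {N p j : ℕ} :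
    (p, j) ∈ triangularMesh N ↔
      1 ≤ p ∧ p + 1 ≤ N ∧ N ≤ p + j ∧ j + 2 ≤ N + p ∧ (p + j) % 2 = N % 2 := by
  simp only [triangularMesh, Set.mem_ofPred_eq]
  omega

namespace stepRel

variable {S : Mesh} {j a b p : ℕ}

theorem symm (h : stepRel S j a b) : stepRel S j b a := by
  rcases h with rfl | ⟨p, hp, ha, hb⟩
  · exact Or.inl rfl
  · exact Or.inr ⟨p, hp, hb, ha⟩

theorem up (h : (p, j) ∈ S) : stepRel S j p (p + 1) :=
  Or.inr ⟨p, h, Or.inl rfl, Or.inr rfl⟩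

theorem down (h : (p, j) ∈ S) : stepRel S j (p + 1) p :=
  (up h).symm

end stepRel

theorem reachesNode.add_le_two_mul_add {S : Mesh} {N n ℓ m : ℕ}
    (hS : ∀ p j, (p, j) ∈ S → N ≤ p + j) (hnℓ : N ≤ n + ℓ)
    (h : reachesNode S n ℓ m) : n + N ≤ 2 * m + ℓ := by
  obtain ⟨w, hw0, hstep, hend⟩ := h
  have bound : ∀ j ≤ ℓ - 1, w j ≤ m ∨ w j + N ≤ 2 * m + j + 1 := by
    intro j hj
    induction j with
    | zero => exact Or.inl hw0.le
    | succ j ih =>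
      have := ih (by omega)
      rcases hstep j (by omega) with heq | ⟨p, hp, ha, hb⟩
      · omega
      · have := hS p (j + 1) hp
        omega
  obtain rfl | hℓ := ℓ.eq_zero_or_pos
  · rw [zero_tsub, hw0] at hend
    omega
  have := bound (ℓ - 1) le_rfl
  omega

theorem reachesNode_triangularMesh {N n ℓ m : ℕ} (h : (n, ℓ) ∈ triangularMesh N)
    (hm : m ≤ N) (hnm : n + N ≤ 2 * m + ℓ) : reachesNode (triangularMesh N) n ℓ m := by
  obtain ⟨hn1, hnN, hlo, hhi, hpar⟩ := mem_triangularMesh.1 h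
  rcases le_or_gt m n with hmn | hnm'
  · -- stay on `m` until layer `m + ℓ - n`, then climb one waveguide per layer up to `n`
    let w : ℕ → ℕ := fun j => min n (m + (j + 1 - (m + ℓ - n)))
    refine ⟨w, by simp only [w]; omega, fun j hj => ?_, Or.inl (by simp only [w]; omega)⟩
    by_cases hstay : w j = w (j + 1)
    · exact Or.inl hstay
    · have hrise : w (j + 1) = w j + 1 := by simp only [w] at hstay ⊢; omega
      rw [hrise]
      exact stepRel.up (mem_triangularMesh.2 (by simp only [w] at hstay ⊢; omega))
  · -- stay on `m` until layer `ℓ + n - m`, then descend one waveguide per layer down to `n + 1`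
    let w : ℕ → ℕ := fun j => max (n + 1) (m - (j - (ℓ + n - m)))
    refine ⟨w, by simp only [w]; omega, fun j hj => ?_, Or.inr (by simp only [w]; omega)⟩
    by_cases hstay : w j = w (j + 1)
    · exact Or.inl hstay
    · have hfall : w j = w (j + 1) + 1 := by simp only [w] at hstay ⊢; omega
      rw [hfall]
      exact stepRel.down (mem_triangularMesh.2 (by simp only [w] at hstay ⊢; omega))

theorem reachableInputs_triangularMesh {N n ℓ : ℕ} (h : (n, ℓ) ∈ triangularMesh N) :
    reachableInputs (triangularMesh N) N n ℓ = Set.Icc ((n + N - ℓ) / 2) N := by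
  obtain ⟨hn1, hnN, hlo, hhi, hpar⟩ := mem_triangularMesh.1 h
  have hS : ∀ p j, (p, j) ∈ triangularMesh N → N ≤ p + j :=
    fun p j hp => (mem_triangularMesh.1 hp).2.2.1
  ext m
  simp only [reachableInputs, Set.mem_ofPred_eq, Set.mem_Icc]
  constructor
  · rintro ⟨-, hm, hr⟩
    have := hr.add_le_two_mul_add hS hlo
    omega
  · rintro ⟨hm1, hm⟩
    exact ⟨by omega, hm, reachesNode_triangularMesh h hm (by omega)⟩

theorem ncard_reachableInputs_triangularMesh {N n ℓ : ℕ} (h : (n, ℓ) ∈ triangularMesh N) :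
    (reachableInputs (triangularMesh N) N n ℓ).ncard = (N + ℓ - n) / 2 + 1 := by
  obtain ⟨hn1, hnN, hlo, hhi, hpar⟩ := mem_triangularMesh.1 h
  rw [reachableInputs_triangularMesh h, Set.ncard_Icc_nat]
  omega

def Mesh.reverse (L : ℕ) (S : Mesh) : Mesh :=
  {x | (x.1, L + 1 - x.2) ∈ S}

theorem nodeReaches_iff_reachesNode_reverse {S : Mesh} {L n ℓ q : ℕ} (hℓ : ℓ ≤ L) :
    nodeReaches S L n ℓ q ↔ reachesNode (Mesh.reverse L S) n (L + 1 - ℓ) q := by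
  have hlast : L + 1 - ℓ - 1 = L - ℓ := by omega
  constructor
  · rintro ⟨w, hstart, hstep, hend⟩
    refine ⟨fun i => w (L - i), by simpa using hend, fun i hi => ?_, ?_⟩
    · have hs := (hstep (L - i) (by omega) (Nat.sub_le L i)).symm
      rw [show L - i - 1 = L - (i + 1) by omega] at hs
      change stepRel S (L + 1 - (i + 1)) _ _
      rwa [show L + 1 - (i + 1) = L - i by omega]
    · simpa only [hlast, Nat.sub_sub_self hℓ] using hstart
  · rintro ⟨v, hstart, hstep, hend⟩
    refine ⟨fun j => v (L - j), by simpa only [hlast] using hend, fun j hj hjL => ?_,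
      by simpa using hstart⟩
    have hs : stepRel S (L + 1 - (L - j + 1)) _ _ := (hstep (L - j) (by omega)).symm
    rwa [show L + 1 - (L - j + 1) = j by omega, show L - j + 1 = L - (j - 1) by omega] at hs

theorem reachableOutputs_eq_reachableInputs_reverse {S : Mesh} {N L n ℓ : ℕ} (hℓ : ℓ ≤ L) :
    reachableOutputs S N L n ℓ = reachableInputs (Mesh.reverse L S) N n (L + 1 - ℓ) := by
  ext q
  simp only [reachableOutputs, reachableInputs, Set.mem_ofPred_eq,
    nodeReaches_iff_reachesNode_reverse hℓ]

theorem triangularMesh_reverse (N : ℕ) :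
    Mesh.reverse (2 * N - 3) (triangularMesh N) = triangularMesh N := by
  ext ⟨p, j⟩
  simp only [Mesh.reverse, Set.mem_ofPred_eq, mem_triangularMesh]
  omega

theorem triangular_sensitivity_index_general (N n ℓ : ℕ)
    (h : (n, ℓ) ∈ triangularMesh N) :
    (reachableInputs (triangularMesh N) N n ℓ).ncard
      + (reachableOutputs (triangularMesh N) N (2 * N - 3) n ℓ).ncard
      + n = 2 * N + 1 := by
  obtain ⟨hn1, hnN, hlo, hhi, hpar⟩ := mem_triangularMesh.1 h
  have h' : (n, 2 * N - 3 + 1 - ℓ) ∈ triangularMesh N := by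
    rwa [← triangularMesh_reverse] at h
  rw [reachableOutputs_eq_reachableInputs_reverse (by omega), triangularMesh_reverse,
    ncard_reachableInputs_triangularMesh h, ncard_reachableInputs_triangularMesh h']
  omega

theorem triangular_sensitivity_index (N n ℓ : ℕ) (hN : 2 ≤ N)
    (h : (n, ℓ) ∈ triangularMesh N) :
    (reachableInputs (triangularMesh N) N n ℓ).ncard
      + (reachableOutputs (triangularMesh N) N (2 * N - 3) n ℓ).ncard
      + n = 2 * N + 1 :=
  triangular_sensitivity_index_general N n ℓ h
end

section
/- In the rectangular (Clements) mesh on N waveguides, define d(x) = 2x−1 for x ≤ ⌊N/2⌋ and d(x) = 2(N−x) for x > ⌊N/2⌋, and s_x[y] = 2(⌊N/2⌋−y)+1 for y ≤ ⌊N/2⌋ and s_x[y] = 2(y−⌊N/2⌋) for y > ⌊N/2⌋, in diagonal coordinates (x,y) = ((n+ℓ)/2, (ℓ−n)/2 + ⌊N/2⌋). Then the sensitivity index α = d(x) + 1 − s_x[y] equals |I| + |O| − N − 1, where |I| and |O| are the numbers of reachable input and output ports of the MZI at (n,ℓ). -/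
/-- The Clements rectangular mesh on `N` waveguides with `N` vertical layers:
an MZI sits at `(n, ℓ)` iff `1 ≤ n ≤ N - 1`, `1 ≤ ℓ ≤ N` and `n ≡ ℓ (mod 2)`. -/
def rectangularMesh (N : ℕ) : Mesh :=
  {p | 1 ≤ p.1 ∧ p.1 ≤ N - 1 ∧ 1 ≤ p.2 ∧ p.2 ≤ N ∧ p.1 % 2 = p.2 % 2}

/-- Length `d(x)` of the diagonal of constant `n + ℓ` at diagonal coordinate `x`. -/
def dDiag (N : ℕ) (x : ℤ) : ℤ :=
  if x ≤ (N / 2 : ℕ) then 2 * x - 1 else 2 * ((N : ℤ) - x)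

/-- The Clements enumeration sequence `s_x[y]`, which depends only on `y`. -/
def sSeq (N : ℕ) (y : ℤ) : ℤ :=
  if y ≤ (N / 2 : ℕ) then 2 * ((N / 2 : ℕ) - y) + 1 else 2 * (y - (N / 2 : ℕ))

/-!
Light moves by at most one waveguide per layer, so from the MZI at `(n, ℓ)` only inputs within
`ℓ - 1` of `{n, n + 1}` and outputs within `N - ℓ` of it can be connected. In the Clements mesh
these bounds are attained by staircase paths, which climb or descend one waveguide per layer after
waiting at most one layer for the parity of the waveguide to match that of the layer. Hence `I` and
`O` are the intervals `[max 1 (n + 1 - ℓ), min N (n + ℓ)]` and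
`[max 1 (n + ℓ - N), min N (n + 1 + N - ℓ)]`, and the identity reduces to case arithmetic on `d`
and `s`.
-/

theorem mem_rectangularMesh {N p j : ℕ} :
    (p, j) ∈ rectangularMesh N ↔ 1 ≤ p ∧ p ≤ N - 1 ∧ 1 ≤ j ∧ j ≤ N ∧ p % 2 = j % 2 :=
  Iff.rfl

theorem stepRel_bounds {S : Mesh} {j a b : ℕ} (h : stepRel S j a b) :
    a ≤ b + 1 ∧ b ≤ a + 1 := by
  rcases h with rfl | ⟨p, -, ha, hb⟩ <;> omega

theorem stepRel_of_mem_min {S : Mesh} {j a b : ℕ}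
    (h : a = b ∨ a ≤ b + 1 ∧ b ≤ a + 1 ∧ (min a b, j) ∈ S) : stepRel S j a b := by
  rcases h with h | ⟨hab, hba, hmem⟩
  · exact Or.inl h
  · exact Or.inr ⟨min a b, hmem, by omega, by omega⟩

theorem displacement_le_of_steps {w : ℕ → ℕ} {a b : ℕ}
    (hw : ∀ j, a ≤ j → j < b → w j ≤ w (j + 1) + 1 ∧ w (j + 1) ≤ w j + 1)
    {j : ℕ} (haj : a ≤ j) (hjb : j ≤ b) :
    w j ≤ w a + (j - a) ∧ w a ≤ w j + (j - a) := by
  induction j, haj using Nat.le_induction with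
  | base => omega
  | succ k hak ih =>
    have hk := ih (by omega)
    have hstep := hw k hak (by omega)
    omega

section StaircaseWalks

variable {N n ℓ : ℕ}

theorem reachesNode_of_le_succ {m : ℕ} (h : (n, ℓ) ∈ rectangularMesh N)
    (hm : 1 ≤ m) (hmn : m ≤ n + 1) (hmℓ : n + 1 ≤ m + ℓ) :
    reachesNode (rectangularMesh N) n ℓ m := by
  rw [mem_rectangularMesh] at h
  refine ⟨fun j => min (m + (j - (m + 1) % 2)) (max m n), ?_,
    fun j _ => stepRel_of_mem_min ?_, ?_⟩ <;> simp only [mem_rectangularMesh] <;> omega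

theorem reachesNode_of_le {m : ℕ} (h : (n, ℓ) ∈ rectangularMesh N)
    (hmN : m ≤ N) (hnm : n ≤ m) (hmℓ : m ≤ n + ℓ) :
    reachesNode (rectangularMesh N) n ℓ m := by
  rw [mem_rectangularMesh] at h
  refine ⟨fun j => max (m - (j - m % 2)) (min m (n + 1)), ?_,
    fun j _ => stepRel_of_mem_min ?_, ?_⟩ <;> simp only [mem_rectangularMesh] <;> omega

theorem nodeReaches_of_succ_le {q : ℕ} (h : (n, ℓ) ∈ rectangularMesh N)
    (hnq : n + 1 ≤ q) (hqN : q ≤ N) (hqℓ : q + ℓ ≤ n + 1 + N) :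
    nodeReaches (rectangularMesh N) N n ℓ q := by
  rw [mem_rectangularMesh] at h
  refine ⟨fun j => min (n + 1 + (j - ℓ)) q, ?_,
    fun j _ _ => stepRel_of_mem_min ?_, ?_⟩ <;> simp only [mem_rectangularMesh] <;> omega

theorem nodeReaches_of_le {q : ℕ} (h : (n, ℓ) ∈ rectangularMesh N)
    (hq : 1 ≤ q) (hqn : q ≤ n) (hqℓ : n + ℓ ≤ q + N) :
    nodeReaches (rectangularMesh N) N n ℓ q := by
  rw [mem_rectangularMesh] at h
  refine ⟨fun j => max (n - (j - ℓ)) q, ?_,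
    fun j _ _ => stepRel_of_mem_min ?_, ?_⟩ <;> simp only [mem_rectangularMesh] <;> omega

end StaircaseWalks

theorem reachableInputs_rectangularMesh {N n ℓ : ℕ} (h : (n, ℓ) ∈ rectangularMesh N) :
    reachableInputs (rectangularMesh N) N n ℓ = Set.Icc (max 1 (n + 1 - ℓ)) (min N (n + ℓ)) := by
  have hmem := mem_rectangularMesh.mp h
  ext m
  simp only [reachableInputs, Set.mem_ofPred_eq, Set.mem_Icc]
  constructor
  · rintro ⟨hm, hmN, w, rfl, hw, hend⟩
    have := displacement_le_of_steps (fun j _ hj => stepRel_bounds (hw j (by omega)))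
      (Nat.zero_le (ℓ - 1)) le_rfl
    omega
  · rintro ⟨hlo, hhi⟩
    refine ⟨by omega, by omega, ?_⟩
    by_cases hmn : m ≤ n + 1
    · exact reachesNode_of_le_succ h (by omega) hmn (by omega)
    · exact reachesNode_of_le h (by omega) (by omega) (by omega)

theorem reachableOutputs_rectangularMesh {N n ℓ : ℕ} (h : (n, ℓ) ∈ rectangularMesh N) :
    reachableOutputs (rectangularMesh N) N N n ℓ
      = Set.Icc (max 1 (n + ℓ - N)) (min N (n + 1 + N - ℓ)) := by
  have hmem := mem_rectangularMesh.mp h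
  ext q
  simp only [reachableOutputs, Set.mem_ofPred_eq, Set.mem_Icc]
  constructor
  · rintro ⟨hq, hqN, w, hstart, hw, rfl⟩
    have := displacement_le_of_steps
      (fun j hj hjN => by simpa using stepRel_bounds (hw (j + 1) (by omega) (by omega)))
      hmem.2.2.2.1 le_rfl
    omega
  · rintro ⟨hlo, hhi⟩
    refine ⟨by omega, by omega, ?_⟩
    by_cases hqn : q ≤ n
    · exact nodeReaches_of_le h (by omega) hqn (by omega)
    · exact nodeReaches_of_succ_le h (by omega) (by omega) (by omega)

theorem dDiag_add_one_sub_sSeq {N n ℓ : ℕ} (h : (n, ℓ) ∈ rectangularMesh N) :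
    dDiag N (((n : ℤ) + ℓ) / 2) + 1 - sSeq N (((ℓ : ℤ) - n) / 2 + (N / 2 : ℕ))
      = ((min N (n + ℓ) + 1 - max 1 (n + 1 - ℓ) : ℕ) : ℤ)
        + ((min N (n + 1 + N - ℓ) + 1 - max 1 (n + ℓ - N) : ℕ) : ℤ) - N - 1 := by
  rw [mem_rectangularMesh] at h
  unfold dDiag sSeq
  split_ifs <;> omega

theorem rectangular_sensitivity_index_general (N n ℓ : ℕ)
    (h : (n, ℓ) ∈ rectangularMesh N) :
    dDiag N (((n : ℤ) + ℓ) / 2) + 1 - sSeq N (((ℓ : ℤ) - n) / 2 + (N / 2 : ℕ))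
      = ((reachableInputs (rectangularMesh N) N n ℓ).ncard : ℤ)
        + ((reachableOutputs (rectangularMesh N) N N n ℓ).ncard : ℤ) - N - 1 := by
  rw [reachableInputs_rectangularMesh h, reachableOutputs_rectangularMesh h,
    Set.ncard_Icc_nat, Set.ncard_Icc_nat]
  exact dDiag_add_one_sub_sSeq h

theorem rectangular_sensitivity_index (N n ℓ : ℕ) (hN : 2 ≤ N)
    (h : (n, ℓ) ∈ rectangularMesh N) :
    dDiag N (((n : ℤ) + ℓ) / 2) + 1 - sSeq N (((ℓ : ℤ) - n) / 2 + (N / 2 : ℕ))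
      = ((reachableInputs (rectangularMesh N) N n ℓ).ncard : ℤ)
        + ((reachableOutputs (rectangularMesh N) N N n ℓ).ncard : ℤ) - N - 1 :=
  rectangular_sensitivity_index_general N n ℓ h
end
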